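/- The map from a bounded Q-function to its softmax policy is Lipschitz in the following sense: for Q, Q' : A → ℝ on a finite set A, the total variation distance between softmax(Q) and softmax(Q') is at most ‖Q − Q'‖_∞ (up to a universal constant 1), i.e., Σ_a |π_Q(a) − π_{Q'}(a)| ≤ 2‖Q − Q'‖_∞. -/

import Mathlib

/-! If `|Q a - Q' a| ≤ ε` for all `a`, the two softmax distributions agree up to a factor
`exp (2 * ε)`. Two probability vectors `p`, `q` with `p ≤ r • q` and `q ≤ r • p` satisfy
`(r + 1) |p a - q a| ≤ (r - 1) (p a + q a)`, so their ℓ¹ distance is at most `2 (r - 1) / (r + 1)`,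
which for `r = exp (2 * ε)` is `2 tanh ε ≤ 2 ε`. -/

open Real Finset

lemma Real.monotone_mul_cosh_sub_sinh : Monotone fun x : ℝ => x * cosh x - sinh x := by
  refine monotone_of_hasDerivAt_nonneg (f' := fun x => x * sinh x) (fun x => ?_) fun x => ?_
  · simpa only [one_mul, add_sub_cancel_left] using
      ((hasDerivAt_id' x).fun_mul (hasDerivAt_cosh x)).fun_sub (hasDerivAt_sinh x)
  · rcases le_total 0 x with hx | hx
    · exact mul_nonneg hx (sinh_nonneg_iff.mpr hx)
    · exact mul_nonneg_of_nonpos_of_nonpos hx (sinh_nonpos_iff.mpr hx)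

lemma Real.sinh_le_mul_cosh {x : ℝ} (hx : 0 ≤ x) : sinh x ≤ x * cosh x := by
  simpa using monotone_mul_cosh_sub_sinh hx

-- `tanh x ≤ x`, cleared of denominators.
lemma Real.exp_two_mul_sub_one_le {x : ℝ} (hx : 0 ≤ x) :
    exp (2 * x) - 1 ≤ x * (exp (2 * x) + 1) := by
  have h := sinh_le_mul_cosh hx
  rw [sinh_eq, cosh_eq] at h
  have hexp : exp (2 * x) = exp x * exp x := by rw [two_mul, exp_add]
  have hinv : exp x * exp (-x) = 1 := by rw [← exp_add, add_neg_cancel, exp_zero]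
  rw [hexp]
  nlinarith [exp_pos x]

lemma abs_sub_mul_le_of_le_mul {r x y : ℝ} (hxy : x ≤ r * y) (hyx : y ≤ r * x) :
    (r + 1) * |x - y| ≤ (r - 1) * (x + y) := by
  rcases le_total x y with h | h
  · rw [abs_of_nonpos (sub_nonpos.mpr h)]; linarith
  · rw [abs_of_nonneg (sub_nonneg.mpr h)]; linarith

section
variable {A : Type*} [Fintype A]

lemma sum_abs_sub_mul_le_of_le_mul {p q : A → ℝ} {r : ℝ} (hp : ∑ a, p a = 1)
    (hq : ∑ a, q a = 1) (hpq : ∀ a, p a ≤ r * q a) (hqp : ∀ a, q a ≤ r * p a) :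
    (r + 1) * ∑ a, |p a - q a| ≤ 2 * (r - 1) := calc
  (r + 1) * ∑ a, |p a - q a| ≤ ∑ a, (r - 1) * (p a + q a) := by
    rw [mul_sum]; exact sum_le_sum fun a _ => abs_sub_mul_le_of_le_mul (hpq a) (hqp a)
  _ = 2 * (r - 1) := by rw [← mul_sum, sum_add_distrib, hp, hq]; ring

noncomputable def softmax (Q : A → ℝ) (a : A) : ℝ := exp (Q a) / ∑ a', exp (Q a')

lemma sum_exp_pos [Nonempty A] (Q : A → ℝ) : 0 < ∑ a, exp (Q a) :=
  sum_pos (fun _ _ => exp_pos _) univ_nonempty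

lemma sum_softmax [Nonempty A] (Q : A → ℝ) : ∑ a, softmax Q a = 1 := by
  simp only [softmax, ← sum_div, div_self (sum_exp_pos Q).ne']

lemma sum_exp_le_exp_mul_sum_exp {Q Q' : A → ℝ} {ε : ℝ} (h : ∀ a, Q a ≤ Q' a + ε) :
    ∑ a, exp (Q a) ≤ exp ε * ∑ a, exp (Q' a) := by
  rw [mul_sum]
  exact sum_le_sum fun a _ => by rw [← exp_add, add_comm ε]; exact exp_le_exp.mpr (h a)

lemma softmax_le_exp_two_mul_softmax {Q Q' : A → ℝ} {ε : ℝ} (h : ∀ a, |Q a - Q' a| ≤ ε)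
    (a : A) : softmax Q a ≤ exp (2 * ε) * softmax Q' a := by
  have : Nonempty A := ⟨a⟩
  have hup : ∀ b, Q b ≤ Q' b + ε := fun b => by linarith [(abs_le.mp (h b)).2]
  have hdown : ∀ b, Q' b ≤ Q b + ε := fun b => by linarith [(abs_le.mp (h b)).1]
  have hden : exp (-ε) * ∑ b, exp (Q' b) ≤ ∑ b, exp (Q b) := by
    rw [exp_neg, inv_mul_le_iff₀ (exp_pos ε)]
    exact sum_exp_le_exp_mul_sum_exp hdown
  calc softmax Q a = exp (Q a) / ∑ b, exp (Q b) := rfl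
    _ ≤ exp ε * exp (Q' a) / (exp (-ε) * ∑ b, exp (Q' b)) := by
      refine div_le_div₀ (by positivity) ?_ (by positivity) hden
      rw [← exp_add, add_comm ε]
      exact exp_le_exp.mpr (hup a)
    _ = exp (2 * ε) * softmax Q' a := by
      rw [softmax, exp_neg, two_mul, exp_add]
      field_simp

lemma sum_abs_softmax_sub_le [Nonempty A] {Q Q' : A → ℝ} {ε : ℝ} (h : ∀ a, |Q a - Q' a| ≤ ε) :
    ∑ a, |softmax Q a - softmax Q' a| ≤ 2 * ε := by
  obtain ⟨a₀⟩ := ‹Nonempty A›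
  have hε : 0 ≤ ε := (abs_nonneg _).trans (h a₀)
  have h' : ∀ a, |Q' a - Q a| ≤ ε := fun a => abs_sub_comm (Q a) (Q' a) ▸ h a
  have htv := sum_abs_sub_mul_le_of_le_mul (sum_softmax Q) (sum_softmax Q')
    (softmax_le_exp_two_mul_softmax h) (softmax_le_exp_two_mul_softmax h')
  have htanh := exp_two_mul_sub_one_le hε
  refine le_of_mul_le_mul_left ?_ (by positivity : 0 < exp (2 * ε) + 1)
  linarith

end

/-- The softmax map is Lipschitz in total variation: for
`Q, Q' : A → ℝ` on a finite nonempty set `A`,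
`∑_a |π_Q(a) − π_{Q'}(a)| ≤ 2 ‖Q − Q'‖_∞`. -/
theorem stmt15 {A : Type*} [Fintype A] [Nonempty A] (Q Q' : A → ℝ) :
    ∑ a, |Real.exp (Q a) / (∑ a', Real.exp (Q a')) -
          Real.exp (Q' a) / (∑ a', Real.exp (Q' a'))| ≤
      2 * Finset.univ.sup' Finset.univ_nonempty (fun a => |Q a - Q' a|) :=
  sum_abs_softmax_sub_le fun a => le_sup' (fun a => |Q a - Q' a|) (mem_univ a)
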